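/- Let A ∈ Σ be a nonzero 2×2 matrix, let m ≥ 1, and let J_m(A) be the 2m×2m complex matrix with m diagonal 2×2 blocks equal to A, identity blocks I₂ on the block superdiagonal, and zero blocks elsewhere. Let C = (C₁, …, C_m) be a 2×2m matrix with blocks C₁, …, C_m ∈ Σ. If C₁ ≠ 0, then ⋂_{n=0}^{m−1} Ker(C · J_m(A)ⁿ) = {0}, i.e. the pair (C, J_m(A)) is observable. -/

import Mathlib

/-!
Σ is a copy of the quaternions inside M₂(ℂ): it is the fixed subring of the ring endomorphism
S ↦ σ₂ S̄ σ₂, each of its nonzero elements is invertible, and every w ∈ ℂ² is the first column of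
an element of Σ. Replacing each 2-block of v by that element turns the equations C Jⁿ v = 0
(n < m) into a linear system over the division ring Σ, whose coefficient rows are the block rows
of C Jⁿ and obey the recursion of right multiplication by a Jordan block. Subtracting b·(row n)
from row n+1 with b = C₁ A C₁⁻¹ eliminates the first unknown and leaves a system of the same shape
with leading coefficient C₁ (1 − [A, C₁⁻¹ C₂]). This is nonzero because a commutator of matrices has
trace 0, so induction on m applies.
-/

open Matrix Complex

noncomputable def sigma2 : Matrix (Fin 2) (Fin 2) ℂ := !![0, -Complex.I; Complex.I, 0]

/-- Membership in Σ. -/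
def memSigma (S : Matrix (Fin 2) (Fin 2) ℂ) : Prop :=
  S.map (starRingEnd ℂ) = sigma2 * S * sigma2

/-- The block Jordan matrix J_m(A): diagonal 2×2 blocks equal to A, identity
blocks on the block superdiagonal, zero elsewhere. -/
def jordanBlockSigma (m : ℕ) (A : Matrix (Fin 2) (Fin 2) ℂ) :
    Matrix (Fin m × Fin 2) (Fin m × Fin 2) ℂ :=
  fun jk kl =>
    if jk.1 = kl.1 then A jk.2 kl.2
    else if (kl.1 : ℕ) = (jk.1 : ℕ) + 1 then (1 : Matrix (Fin 2) (Fin 2) ℂ) jk.2 kl.2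
    else 0

open ComplexConjugate Finset

section Jordan

variable {R : Type*} [Ring R]

-- The row `o` times the Jordan block with diagonal entry `a`, for rows of unbounded length.
def mulJordan (a : R) (o : ℕ → R) : ℕ → R
  | 0 => o 0 * a
  | s + 1 => o (s + 1) * a + o s

theorem mulJordan_congr (a : R) {o p : ℕ → R} {s : ℕ} (h : ∀ t ≤ s, o t = p t) :
    mulJordan a o s = mulJordan a p s := by
  cases s with
  | zero => simp only [mulJordan, h 0 le_rfl]
  | succ s => simp only [mulJordan, h s (by omega), h (s + 1) le_rfl]

theorem map_iterate_mulJordan {S : Type*} [Ring S] (f : R →+* S) (a : R) (o : ℕ → R) (n : ℕ) :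
    f ∘ (mulJordan a)^[n] o = (mulJordan (f a))^[n] (f ∘ o) := by
  have hsemi : Function.Semiconj (f ∘ ·) (mulJordan a) (mulJordan (f a)) := by
    intro o; funext s; cases s <;> simp [mulJordan]
  exact hsemi.iterate_right n o

-- `o J(a) - b o` without its first entry, which vanishes when `b * o 0 = o 0 * a`.
def eliminate (a b : R) (o : ℕ → R) (s : ℕ) : R :=
  mulJordan a o (s + 1) - b * o (s + 1)

variable {a b : R}

theorem mul_iterate_mulJordan_zero {o : ℕ → R} (h : b * o 0 = o 0 * a) (n : ℕ) :
    b * (mulJordan a)^[n] o 0 = (mulJordan a)^[n] o 0 * a := by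
  induction n with
  | zero => exact h
  | succ n ih => rw [Function.iterate_succ_apply', mulJordan, ← mul_assoc, ih]

theorem mulJordan_eliminate {o : ℕ → R} (h : b * o 0 = o 0 * a) :
    mulJordan a (eliminate a b o) = eliminate a b (mulJordan a o) := by
  funext s
  cases s with
  | zero => simp only [mulJordan, eliminate, sub_mul, add_mul, mul_add, mul_assoc, h]; abel
  | succ s => simp only [mulJordan, eliminate]; noncomm_ring

theorem iterate_mulJordan_eliminate {o : ℕ → R} (h : b * o 0 = o 0 * a) (n : ℕ) :
    (mulJordan a)^[n] (eliminate a b o) = eliminate a b ((mulJordan a)^[n] o) := by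
  induction n with
  | zero => rfl
  | succ n ih =>
    rw [Function.iterate_succ_apply', ih, Function.iterate_succ_apply',
      mulJordan_eliminate (mul_iterate_mulJordan_zero h n)]

end Jordan

section DivisionRing

variable {D : Type*} [DivisionRing D] {a : D}

theorem eq_zero_of_sum_iterate_mulJordan_mul_eq_zero (ha : ∀ x : D, a * x - x * a ≠ 1)
    (m : ℕ) (o V : ℕ → D) (ho : o 0 ≠ 0)
    (hV : ∀ n < m, ∑ s ∈ range m, (mulJordan a)^[n] o s * V s = 0) :
    ∀ s < m, V s = 0 := by
  induction m generalizing o V with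
  | zero => intro s hs; omega
  | succ m ih =>
    set c := o 0
    set b := c * a * c⁻¹
    have hb : b * c = c * a := by simp [b, mul_assoc, inv_mul_cancel₀ ho]
    have hlead : eliminate a b o 0 = c * (1 - (a * (c⁻¹ * o 1) - c⁻¹ * o 1 * a)) := by
      simp only [eliminate, mulJordan, b, mul_sub, mul_one, ← mul_assoc, mul_inv_cancel₀ ho,
        one_mul]
      abel
    have htail : ∀ s < m, V (s + 1) = 0 := by
      refine ih (eliminate a b o) (fun s => V (s + 1)) ?_ fun n hn => ?_
      · rw [hlead]
        exact mul_ne_zero ho (sub_ne_zero.mpr (ha _).symm)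
      · have hrow := congrArg₂ (· - b * ·) (hV (n + 1) (by omega)) (hV n (by omega))
        simp only [mul_zero, sub_zero, Finset.mul_sum, ← Finset.sum_sub_distrib, ← mul_assoc,
          ← sub_mul] at hrow
        rw [sum_range_succ', Function.iterate_succ_apply', mulJordan,
          ← mul_iterate_mulJordan_zero hb n, sub_self, zero_mul, add_zero] at hrow
        rw [iterate_mulJordan_eliminate hb]
        simpa only [eliminate, Function.iterate_succ_apply'] using hrow
    have hhead : c * V 0 = 0 := by
      have hrow := hV 0 (by omega)
      rw [sum_range_succ', sum_eq_zero fun s hs => by rw [htail s (mem_range.mp hs), mul_zero],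
        zero_add] at hrow
      exact hrow
    intro s hs
    cases s with
    | zero => exact (mul_eq_zero.mp hhead).resolve_left ho
    | succ s => exact htail s (by omega)

end DivisionRing

theorem sigma2_mul_sigma2 : sigma2 * sigma2 = 1 := by
  ext i j; fin_cases i <;> fin_cases j <;> simp [sigma2, mul_apply]

theorem sigma2_mul_mul_sigma2 (S : Matrix (Fin 2) (Fin 2) ℂ) :
    sigma2 * S * sigma2 = !![S 1 1, -S 1 0; -S 0 1, S 0 0] := by
  ext i j
  fin_cases i <;> fin_cases j <;> simp only [mul_apply, Fin.sum_univ_two] <;>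
    simp [sigma2, mul_right_comm _ _ I]

noncomputable def sigmaConj : Matrix (Fin 2) (Fin 2) ℂ →+* Matrix (Fin 2) (Fin 2) ℂ where
  toFun S := sigma2 * S.map (starRingEnd ℂ) * sigma2
  map_one' := by simp [sigma2_mul_sigma2]
  map_mul' S T := by
    rw [Matrix.map_mul]
    calc sigma2 * (S.map (starRingEnd ℂ) * T.map (starRingEnd ℂ)) * sigma2
        = sigma2 * S.map (starRingEnd ℂ) * 1 * T.map (starRingEnd ℂ) * sigma2 := by
          simp [Matrix.mul_assoc]
      _ = _ := by rw [← sigma2_mul_sigma2]; simp only [Matrix.mul_assoc]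
  map_zero' := by simp
  map_add' S T := by simp [Matrix.map_add, Matrix.mul_add, Matrix.add_mul]

theorem sigma2_mul_mul_sigma2_cancel (X : Matrix (Fin 2) (Fin 2) ℂ) :
    sigma2 * (sigma2 * X * sigma2) * sigma2 = X := by
  rw [← Matrix.mul_assoc, ← Matrix.mul_assoc, sigma2_mul_sigma2, Matrix.one_mul,
    Matrix.mul_assoc, sigma2_mul_sigma2, Matrix.mul_one]

theorem memSigma_iff_sigmaConj {S : Matrix (Fin 2) (Fin 2) ℂ} : memSigma S ↔ sigmaConj S = S := by
  change _ ↔ sigma2 * S.map (starRingEnd ℂ) * sigma2 = S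
  constructor <;> intro h
  · rw [h, sigma2_mul_mul_sigma2_cancel]
  · exact (sigma2_mul_mul_sigma2_cancel _).symm.trans (by rw [h])

noncomputable def sigmaSubring : Subring (Matrix (Fin 2) (Fin 2) ℂ) :=
  sigmaConj.eqLocus (RingHom.id _)

theorem mem_sigmaSubring {S : Matrix (Fin 2) (Fin 2) ℂ} : S ∈ sigmaSubring ↔ memSigma S :=
  memSigma_iff_sigmaConj.symm

noncomputable def quatOfCol (w : Fin 2 → ℂ) : Matrix (Fin 2) (Fin 2) ℂ :=
  !![w 0, -conj (w 1); w 1, conj (w 0)]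

@[simp]
theorem quatOfCol_apply_zero (w : Fin 2 → ℂ) (i : Fin 2) : quatOfCol w i 0 = w i := by
  fin_cases i <;> rfl

theorem memSigma_quatOfCol (w : Fin 2 → ℂ) : memSigma (quatOfCol w) := by
  rw [memSigma, sigma2_mul_mul_sigma2]
  ext i j
  fin_cases i <;> fin_cases j <;> simp [quatOfCol]

theorem memSigma.eq_quatOfCol {S : Matrix (Fin 2) (Fin 2) ℂ} (h : memSigma S) :
    S = quatOfCol (fun i => S i 0) := by
  rw [memSigma, sigma2_mul_mul_sigma2] at h
  have h01 := congrArg conj (congrFun₂ h 0 1)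
  have h11 := congrArg conj (congrFun₂ h 1 1)
  simp only [map_apply, of_apply, cons_val', cons_val_zero, cons_val_one, empty_val',
    cons_val_fin_one, conj_conj, map_neg] at h01 h11
  ext i j
  fin_cases i <;> fin_cases j <;> simp [quatOfCol, h01, h11]

theorem det_quatOfCol (w : Fin 2 → ℂ) :
    (quatOfCol w).det = (normSq (w 0) + normSq (w 1) : ℝ) := by
  simp [quatOfCol, det_fin_two, mul_conj, mul_comm (conj (w 1))]

theorem memSigma.eq_zero_of_col_eq_zero {S : Matrix (Fin 2) (Fin 2) ℂ} (h : memSigma S)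
    (hcol : ∀ i, S i 0 = 0) : S = 0 := by
  rw [h.eq_quatOfCol]
  ext i j
  fin_cases i <;> fin_cases j <;> simp [quatOfCol, hcol]

theorem memSigma.isUnit_det {S : Matrix (Fin 2) (Fin 2) ℂ} (h : memSigma S) (hS : S ≠ 0) :
    IsUnit S.det := by
  refine isUnit_iff_ne_zero.mpr fun hdet => hS (h.eq_zero_of_col_eq_zero ?_)
  rw [h.eq_quatOfCol, det_quatOfCol, ofReal_eq_zero] at hdet
  have hnorm := (add_eq_zero_iff_of_nonneg (normSq_nonneg _) (normSq_nonneg _)).mp hdet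
  intro i; fin_cases i
  exacts [normSq_eq_zero.mp hnorm.1, normSq_eq_zero.mp hnorm.2]

theorem sigmaConj_nonsing_inv {S : Matrix (Fin 2) (Fin 2) ℂ} (h : sigmaConj S = S)
    (hS : IsUnit S.det) : sigmaConj S⁻¹ = S⁻¹ := by
  refine (inv_eq_left_inv ?_).symm
  calc sigmaConj S⁻¹ * S = sigmaConj (S⁻¹ * S) := by rw [map_mul, h]
    _ = 1 := by rw [nonsing_inv_mul S hS, map_one]

theorem isUnit_or_eq_zero_sigmaSubring (S : sigmaSubring) : IsUnit S ∨ S = 0 := by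
  by_cases hS : S = 0
  · exact Or.inr hS
  have hmem := mem_sigmaSubring.mp S.2
  have hdet := hmem.isUnit_det (by simpa using hS)
  have hinv : (S : Matrix (Fin 2) (Fin 2) ℂ)⁻¹ ∈ sigmaSubring :=
    sigmaConj_nonsing_inv S.2 hdet
  refine Or.inl (isUnit_iff_exists.mpr ⟨⟨_, hinv⟩, ?_, ?_⟩) <;> ext1
  exacts [mul_nonsing_inv _ hdet, nonsing_inv_mul _ hdet]

noncomputable instance : DivisionRing sigmaSubring :=
  DivisionRing.ofIsUnitOrEqZero isUnit_or_eq_zero_sigmaSubring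

theorem Matrix.mul_sub_mul_ne_one {n R : Type*} [Fintype n] [DecidableEq n] [Nonempty n]
    [CommRing R] [CharZero R] (A B : Matrix n n R) : A * B - B * A ≠ 1 := by
  intro h
  have := congrArg trace h
  rw [trace_sub, trace_mul_comm, sub_self, trace_one] at this
  exact Fintype.card_ne_zero (Nat.cast_eq_zero.mp this.symm)

section Blocks

variable {ι κ R : Type*} {m : ℕ}

def colBlock [Zero R] (M : Matrix ι (Fin m × κ) R) (s : ℕ) : Matrix ι κ R :=
  if h : s < m then M.submatrix id (Prod.mk ⟨s, h⟩) else 0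

def vecBlock [Zero R] (v : Fin m × κ → R) (s : ℕ) : κ → R :=
  if h : s < m then fun b => v (⟨s, h⟩, b) else 0

theorem mulVec_eq_sum_colBlock [Fintype κ] [NonUnitalNonAssocSemiring R]
    (M : Matrix ι (Fin m × κ) R) (v : Fin m × κ → R) :
    M *ᵥ v = ∑ s ∈ range m, colBlock M s *ᵥ vecBlock v s := by
  ext i
  rw [Finset.sum_apply, ← Fin.sum_univ_eq_sum_range]
  simp [mulVec, dotProduct, Fintype.sum_prod_type, colBlock, vecBlock]

end Blocks

theorem jordanBlockSigma_apply (m : ℕ) (A : Matrix (Fin 2) (Fin 2) ℂ) (j k : Fin m) (l b : Fin 2) :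
    jordanBlockSigma m A (j, l) (k, b) =
      (if j = k then A l b else 0) +
        (if (k : ℕ) = j + 1 then (1 : Matrix (Fin 2) (Fin 2) ℂ) l b else 0) := by
  unfold jordanBlockSigma
  split_ifs <;> simp_all

theorem mul_jordanBlockSigma_apply {ι : Type*} {m : ℕ} (A : Matrix (Fin 2) (Fin 2) ℂ)
    (M : Matrix ι (Fin m × Fin 2) ℂ) (i : ι) (k : Fin m) (b : Fin 2) :
    (M * jordanBlockSigma m A) i (k, b) =
      (M.submatrix id (Prod.mk k) * A) i b +
        ∑ j : Fin m, if (k : ℕ) = j + 1 then M i (j, b) else 0 := by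
  simp [mul_apply, Fintype.sum_prod_type, jordanBlockSigma_apply, mul_add, sum_add_distrib,
    one_apply]

theorem colBlock_mul_jordanBlockSigma {m : ℕ} (A : Matrix (Fin 2) (Fin 2) ℂ)
    (M : Matrix (Fin 2) (Fin m × Fin 2) ℂ) {s : ℕ} (hs : s < m) :
    colBlock (M * jordanBlockSigma m A) s = mulJordan A (colBlock M) s := by
  ext i b
  cases s with
  | zero => simp [colBlock, hs, mulJordan, mul_jordanBlockSigma_apply]
  | succ s =>
    have hs' : s < m := by omega
    simp only [colBlock, hs, hs', mulJordan, dite_true, Matrix.add_apply,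
      submatrix_apply, id, mul_jordanBlockSigma_apply, Nat.add_right_cancel_iff]
    rw [Fintype.sum_eq_single (⟨s, hs'⟩ : Fin m) fun j hj => if_neg fun h => hj (Fin.ext h.symm),
      if_pos rfl]

theorem sigmaSubring_mul_sub_mul_ne_one (a x : sigmaSubring) : a * x - x * a ≠ 1 := fun h =>
  Matrix.mul_sub_mul_ne_one (a : Matrix (Fin 2) (Fin 2) ℂ) x
    (by simpa using congrArg Subtype.val h)

theorem colBlock_mem_sigmaSubring {m : ℕ} {C : Matrix (Fin 2) (Fin m × Fin 2) ℂ}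
    (hC : ∀ j : Fin m, memSigma (fun a b => C a (j, b))) (s : ℕ) : colBlock C s ∈ sigmaSubring := by
  unfold colBlock
  split_ifs
  exacts [mem_sigmaSubring.mpr (hC _), zero_mem _]

theorem colBlock_mul_jordanBlockSigma_pow {m : ℕ} (A : Matrix (Fin 2) (Fin 2) ℂ)
    (M : Matrix (Fin 2) (Fin m × Fin 2) ℂ) (n : ℕ) {s : ℕ} (hs : s < m) :
    colBlock (M * jordanBlockSigma m A ^ n) s = (mulJordan A)^[n] (colBlock M) s := by
  induction n generalizing s with
  | zero => simp
  | succ n ih =>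
    rw [pow_succ, ← Matrix.mul_assoc, colBlock_mul_jordanBlockSigma A _ hs,
      Function.iterate_succ_apply']
    exact mulJordan_congr A fun t ht => ih (by omega)

theorem mulVec_apply_eq_sum_colBlock_mul_quatOfCol {m : ℕ} (M : Matrix (Fin 2) (Fin m × Fin 2) ℂ)
    (v : Fin m × Fin 2 → ℂ) (i : Fin 2) :
    (M *ᵥ v) i = (∑ s ∈ range m, colBlock M s * quatOfCol (vecBlock v s)) i 0 := by
  rw [mulVec_eq_sum_colBlock, Finset.sum_apply, Matrix.sum_apply]
  simp [mul_apply, mulVec, dotProduct]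

noncomputable def sigmaVecBlock {m : ℕ} (v : Fin m × Fin 2 → ℂ) (s : ℕ) : sigmaSubring :=
  ⟨quatOfCol (vecBlock v s), mem_sigmaSubring.mpr (memSigma_quatOfCol _)⟩

theorem sum_mul_sigmaVecBlock_eq_zero {m : ℕ} {M : Matrix (Fin 2) (Fin m × Fin 2) ℂ}
    {v : Fin m × Fin 2 → ℂ} (O : ℕ → sigmaSubring)
    (hO : ∀ s < m, (O s : Matrix (Fin 2) (Fin 2) ℂ) = colBlock M s) (hv : M *ᵥ v = 0) :
    ∑ s ∈ range m, O s * sigmaVecBlock v s = 0 := by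
  apply Subtype.ext
  rw [ZeroMemClass.coe_zero]
  refine memSigma.eq_zero_of_col_eq_zero (mem_sigmaSubring.mp (Subtype.property _)) fun i => ?_
  rw [AddSubmonoidClass.coe_finsetSum, sum_congr rfl fun s hs => by
    rw [MulMemClass.coe_mul, hO s (mem_range.mp hs)]]
  exact (mulVec_apply_eq_sum_colBlock_mul_quatOfCol M v i).symm.trans (congrFun hv i)

theorem eq_zero_of_sigmaVecBlock_eq_zero {m : ℕ} {v : Fin m × Fin 2 → ℂ}
    (h : ∀ s < m, sigmaVecBlock v s = 0) : v = 0 := by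
  funext ⟨k, b⟩
  simpa [sigmaVecBlock, vecBlock] using
    congrArg (fun X : sigmaSubring => (X : Matrix (Fin 2) (Fin 2) ℂ) b 0) (h k k.2)

theorem observable_of_first_block_nonzero_general (m : ℕ) (hm : 1 ≤ m)
    (A : Matrix (Fin 2) (Fin 2) ℂ) (hA : memSigma A)
    (C : Matrix (Fin 2) (Fin m × Fin 2) ℂ)
    (hC : ∀ j : Fin m, memSigma (fun a b => C a (j, b)))
    (hC1 : (fun a b => C a ((⟨0, hm⟩ : Fin m), b)) ≠ (0 : Matrix (Fin 2) (Fin 2) ℂ)) :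
    ∀ v : Fin m × Fin 2 → ℂ,
      (∀ n < m, (C * jordanBlockSigma m A ^ n).mulVec v = 0) → v = 0 := by
  intro v hv
  let a : sigmaSubring := ⟨A, mem_sigmaSubring.mpr hA⟩
  let o : ℕ → sigmaSubring := fun s => ⟨colBlock C s, colBlock_mem_sigmaSubring hC s⟩
  have ho : o 0 ≠ 0 := fun h => hC1 ((dif_pos hm).symm.trans (congrArg Subtype.val h))
  refine eq_zero_of_sigmaVecBlock_eq_zero <|
    eq_zero_of_sum_iterate_mulJordan_mul_eq_zero (sigmaSubring_mul_sub_mul_ne_one a) m o _ ho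
      fun n hn => sum_mul_sigmaVecBlock_eq_zero _ (fun s hs => ?_) (hv n hn)
  rw [colBlock_mul_jordanBlockSigma_pow A C n hs]
  exact congrFun (map_iterate_mulJordan sigmaSubring.subtype a o n) s

/-- if A ∈ Σ is nonzero and C = (C₁,…,C_m) has blocks in Σ with
C₁ ≠ 0, then ⋂_{n=0}^{m−1} Ker (C · J_m(A)ⁿ) = {0}: the pair (C, J_m(A)) is
observable. -/
theorem observable_of_first_block_nonzero (m : ℕ) (hm : 1 ≤ m)
    (A : Matrix (Fin 2) (Fin 2) ℂ) (hA : memSigma A) (hA0 : A ≠ 0)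
    (C : Matrix (Fin 2) (Fin m × Fin 2) ℂ)
    (hC : ∀ j : Fin m, memSigma (fun a b => C a (j, b)))
    (hC1 : (fun a b => C a ((⟨0, hm⟩ : Fin m), b)) ≠ (0 : Matrix (Fin 2) (Fin 2) ℂ)) :
    ∀ v : Fin m × Fin 2 → ℂ,
      (∀ n < m, (C * jordanBlockSigma m A ^ n).mulVec v = 0) → v = 0 :=
  observable_of_first_block_nonzero_general m hm A hA C hC hC1
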